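/- Let n, d ≥ 1 be integers and 1 < p < ∞. If V is a matrix weight on ℝⁿ belonging to the matrix reverse Hölder class 𝓑_p with constant C_V, then the scalar function x ↦ ‖V(x)‖ belongs to the scalar reverse Hölder class B_p with constant at most d^{3−1/p} C_V; that is, for every cube Q ⊂ ℝⁿ, (⨍_Q ‖V(x)‖^p dx)^{1/p} ≤ d^{3−1/p} C_V ⨍_Q ‖V(x)‖ dx. -/

import Mathlib

open MeasureTheory
open scoped ComplexOrder

noncomputable section

/-- The open cube in `ℝⁿ` centered at `x` with half side length `r` (side length `2r`). -/
def cube {n : ℕ} (x : Fin n → ℝ) (r : ℝ) : Set (Fin n → ℝ) :=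
  {y | ∀ i, |y i - x i| < r}

/-- Entrywise integral of a real matrix-valued function over a set. -/
def matInt {n d : ℕ} (V : (Fin n → ℝ) → Matrix (Fin d) (Fin d) ℝ)
    (s : Set (Fin n → ℝ)) : Matrix (Fin d) (Fin d) ℝ :=
  Matrix.of fun i j => ∫ y in s, V y i j

/-- Entrywise average of a real matrix-valued function over a set. -/
def matAvg {n d : ℕ} (V : (Fin n → ℝ) → Matrix (Fin d) (Fin d) ℝ)
    (s : Set (Fin n → ℝ)) : Matrix (Fin d) (Fin d) ℝ :=
  Matrix.of fun i j => ⨍ y in s, V y i j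

/-- The quadratic form `⟨A e, e⟩`. -/
def qf {d : ℕ} (A : Matrix (Fin d) (Fin d) ℝ) (e : Fin d → ℝ) : ℝ :=
  dotProduct e (A.mulVec e)

/-- Squared Euclidean norm of a real vector. -/
def vnormSq {d : ℕ} (e : Fin d → ℝ) : ℝ := ∑ i, e i ^ 2

/-- The Euclidean operator norm of a real square matrix (its largest singular value). -/
def matOpNorm {d : ℕ} (A : Matrix (Fin d) (Fin d) ℝ) : ℝ :=
  sSup {t : ℝ | ∃ e : Fin d → ℝ, vnormSq e = 1 ∧ t = Real.sqrt (vnormSq (A.mulVec e))}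

/-- `V` is a matrix weight: measurable, a.e. symmetric positive semidefinite, and with
locally integrable operator norm. -/
def IsMatrixWeight {n d : ℕ} (V : (Fin n → ℝ) → Matrix (Fin d) (Fin d) ℝ) : Prop :=
  (∀ i j, Measurable fun x => V x i j) ∧
  (∀ᵐ (x : Fin n → ℝ) ∂volume, (V x).PosSemidef) ∧
  ∀ (x : Fin n → ℝ) (r : ℝ), 0 < r → IntegrableOn (fun y => matOpNorm (V y)) (cube x r)

/-- The matrix reverse Hölder class `𝓑_p` with constant `C`. -/
def MemBp {n d : ℕ} (p C : ℝ) (V : (Fin n → ℝ) → Matrix (Fin d) (Fin d) ℝ) : Prop :=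
  (∀ (x : Fin n → ℝ) (r : ℝ), 0 < r →
    IntegrableOn (fun y => matOpNorm (V y) ^ p) (cube x r)) ∧
  ∀ (x : Fin n → ℝ) (r : ℝ), 0 < r → ∀ e : Fin d → ℝ,
    (⨍ y in cube x r, qf (V y) e ^ p) ^ (1 / p) ≤ C * qf (matAvg V (cube x r)) e

/-- The scalar reverse Hölder class `B_p` with constant `C`. -/
def MemBpScalar {n : ℕ} (p C : ℝ) (v : (Fin n → ℝ) → ℝ) : Prop :=
  (∀ (x : Fin n → ℝ) (r : ℝ), 0 < r → IntegrableOn (fun y => v y ^ p) (cube x r)) ∧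
  ∀ (x : Fin n → ℝ) (r : ℝ), 0 < r →
    (⨍ y in cube x r, v y ^ p) ^ (1 / p) ≤ C * ⨍ y in cube x r, v y

/-- The averaged matrix `Ψ(x,r;V) = r^{2-n} ∫_{Q(x,r)} V`. -/
def Psi {n d : ℕ} (x : Fin n → ℝ) (r : ℝ)
    (V : (Fin n → ℝ) → Matrix (Fin d) (Fin d) ℝ) : Matrix (Fin d) (Fin d) ℝ :=
  r ^ ((2 : ℝ) - n) • matInt V (cube x r)

/-- The nondegeneracy class `ND`. -/
def MemND {n d : ℕ} (V : (Fin n → ℝ) → Matrix (Fin d) (Fin d) ℝ) : Prop :=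
  ∀ E : Set (Fin n → ℝ), MeasurableSet E → 0 < volume E → (matInt V E).PosDef

/-- The set of radii used to define the lower auxiliary function. -/
def lowerSet {n d : ℕ} (V : (Fin n → ℝ) → Matrix (Fin d) (Fin d) ℝ)
    (x : Fin n → ℝ) : Set ℝ :=
  {r : ℝ | 0 < r ∧ ∃ e : Fin d → ℝ, vnormSq e = 1 ∧ qf (Psi x r V) e ≤ 1}

/-- The lower auxiliary function `m̲(x,V)`. -/
def mLower {n d : ℕ} (V : (Fin n → ℝ) → Matrix (Fin d) (Fin d) ℝ) (x : Fin n → ℝ) : ℝ :=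
  (sSup (lowerSet V x))⁻¹

/-- The set of radii used to define the upper auxiliary function. -/
def upperSet {n d : ℕ} (V : (Fin n → ℝ) → Matrix (Fin d) (Fin d) ℝ)
    (x : Fin n → ℝ) : Set ℝ :=
  {r : ℝ | 0 < r ∧ matOpNorm (Psi x r V) ≤ 1}

/-- The upper auxiliary function `m̄(x,V)`. -/
def mUpper {n d : ℕ} (V : (Fin n → ℝ) → Matrix (Fin d) (Fin d) ℝ) (x : Fin n → ℝ) : ℝ :=
  (sSup (upperSet V x))⁻¹

/-- The set of radii used to define the scalar auxiliary function. -/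
def scalSet {n : ℕ} (v : (Fin n → ℝ) → ℝ) (x : Fin n → ℝ) : Set ℝ :=
  {r : ℝ | 0 < r ∧ r ^ ((2 : ℝ) - n) * ∫ y in cube x r, v y ≤ 1}

/-- The scalar auxiliary function `m(x,v)`. -/
def mScal {n : ℕ} (v : (Fin n → ℝ) → ℝ) (x : Fin n → ℝ) : ℝ :=
  (sSup (scalSet v x))⁻¹

/-- The positive semidefinite square root of a matrix (junk value `0` off the
positive semidefinite matrices). -/
def msqrt {d : ℕ} (A : Matrix (Fin d) (Fin d) ℝ) : Matrix (Fin d) (Fin d) ℝ :=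
  @dite _ A.PosSemidef (Classical.dec _) (fun h => (h.1.eigenvectorUnitary : Matrix (Fin d) (Fin d) ℝ) *
    Matrix.diagonal (RCLike.ofReal ∘ Real.sqrt ∘ h.1.eigenvalues : Fin d → ℝ) *
    star (h.1.eigenvectorUnitary : Matrix (Fin d) (Fin d) ℝ)) fun _ => 0

/-- The noncommutativity class `NC` with constant `N`. -/
def MemNC {n d : ℕ} (N : ℝ) (V : (Fin n → ℝ) → Matrix (Fin d) (Fin d) ℝ) : Prop :=
  ∀ (x : Fin n → ℝ) (e : Fin d → ℝ),
    N * vnormSq e ≤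
      ∫ y in cube x (mLower V x)⁻¹,
        qf (msqrt (V y) * (matInt V (cube x (mLower V x)⁻¹))⁻¹ * msqrt (V y)) e

/-- The matrix `𝓐_∞` class. -/
def MemAinf {n d : ℕ} (V : (Fin n → ℝ) → Matrix (Fin d) (Fin d) ℝ) : Prop :=
  ∀ ε : ℝ, 0 < ε → ∃ δ : ℝ, 0 < δ ∧ ∀ (x : Fin n → ℝ) (r : ℝ), 0 < r →
    ENNReal.ofReal (1 - ε) * volume (cube x r) ≤
      volume {y ∈ cube x r | (V y - δ • matAvg V (cube x r)).PosSemidef}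

/-- The smallest eigenvalue of a symmetric matrix (as the infimum of the Rayleigh
quotient over the unit sphere). -/
def lam1 {d : ℕ} (A : Matrix (Fin d) (Fin d) ℝ) : ℝ :=
  sInf {t : ℝ | ∃ e : Fin d → ℝ, vnormSq e = 1 ∧ t = qf A e}

/-- Squared Frobenius norm of the Jacobian matrix `Du(x)`. -/
def jacFrobSq {n d : ℕ} (u : (Fin n → ℝ) → Fin d → ℝ) (x : Fin n → ℝ) : ℝ :=
  ∑ j, ∑ i, (fderiv ℝ u x (Pi.single i 1) j) ^ 2

/-! ### Complex (Hermitian) versions -/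

/-- The (real-valued) quadratic form `⟨A e, e⟩` of a Hermitian matrix. -/
def qfC {d : ℕ} (A : Matrix (Fin d) (Fin d) ℂ) (e : Fin d → ℂ) : ℝ :=
  (dotProduct (star e) (A.mulVec e)).re

/-- Squared Euclidean norm of a complex vector. -/
def vnormSqC {d : ℕ} (e : Fin d → ℂ) : ℝ := ∑ i, Complex.normSq (e i)

/-- Entrywise integral of a complex matrix-valued function over a set. -/
def matIntC {n d : ℕ} (V : (Fin n → ℝ) → Matrix (Fin d) (Fin d) ℂ)
    (s : Set (Fin n → ℝ)) : Matrix (Fin d) (Fin d) ℂ :=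
  Matrix.of fun i j => ∫ y in s, V y i j

/-- Entrywise average of a complex matrix-valued function over a set. -/
def matAvgC {n d : ℕ} (V : (Fin n → ℝ) → Matrix (Fin d) (Fin d) ℂ)
    (s : Set (Fin n → ℝ)) : Matrix (Fin d) (Fin d) ℂ :=
  Matrix.of fun i j => ⨍ y in s, V y i j

/-- The Euclidean operator norm of a complex square matrix. -/
def matOpNormC {d : ℕ} (A : Matrix (Fin d) (Fin d) ℂ) : ℝ :=
  sSup {t : ℝ | ∃ e : Fin d → ℂ, vnormSqC e = 1 ∧ t = Real.sqrt (vnormSqC (A.mulVec e))}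

/-- `V` is a Hermitian matrix weight. -/
def IsHermWeight {n d : ℕ} (V : (Fin n → ℝ) → Matrix (Fin d) (Fin d) ℂ) : Prop :=
  (∀ i j, Measurable fun x => V x i j) ∧
  (∀ᵐ (x : Fin n → ℝ) ∂volume, (V x).PosSemidef) ∧
  ∀ (x : Fin n → ℝ) (r : ℝ), 0 < r → IntegrableOn (fun y => matOpNormC (V y)) (cube x r)

/-- The nondegeneracy class `ND` for Hermitian weights. -/
def MemNDC {n d : ℕ} (V : (Fin n → ℝ) → Matrix (Fin d) (Fin d) ℂ) : Prop :=
  ∀ E : Set (Fin n → ℝ), MeasurableSet E → 0 < volume E → (matIntC V E).PosDef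

/-- The matrix `𝓐_∞` class for Hermitian weights. -/
def MemAinfC {n d : ℕ} (V : (Fin n → ℝ) → Matrix (Fin d) (Fin d) ℂ) : Prop :=
  ∀ ε : ℝ, 0 < ε → ∃ δ : ℝ, 0 < δ ∧ ∀ (x : Fin n → ℝ) (r : ℝ), 0 < r →
    ENNReal.ofReal (1 - ε) * volume (cube x r) ≤
      volume {y ∈ cube x r | (V y - δ • matAvgC V (cube x r)).PosSemidef}

/-- The geometric average `exp(⨍_s ln w)` of a nonnegative function, with the
conventions `ln 0 = -∞` and `exp (-∞) = 0`. -/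
def geomMean {n : ℕ} (w : (Fin n → ℝ) → ℝ) (s : Set (Fin n → ℝ)) : ℝ :=
  @ite _ ((∀ᵐ y ∂(volume.restrict s), 0 < w y) ∧
      IntegrableOn (fun y => Real.log (w y)) s) (Classical.dec _)
    (Real.exp (⨍ y in s, Real.log (w y))) 0

/-- The scalar `A_∞` class. -/
def ScalarAinf {n : ℕ} (w : (Fin n → ℝ) → ℝ) : Prop :=
  ∀ ε : ℝ, 0 < ε → ∃ δ : ℝ, 0 < δ ∧ ∀ (x : Fin n → ℝ) (r : ℝ), 0 < r →
    ENNReal.ofReal (1 - ε) * volume (cube x r) ≤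
      volume {y ∈ cube x r | δ * ⨍ z in cube x r, w z ≤ w y}


/-!
For positive semidefinite `A` one has `A i i ≤ ‖A‖ ≤ tr A`, hence
`‖A‖ ^ p ≤ d ^ (p - 1) ∑ᵢ A i i ^ p` by convexity of `t ↦ t ^ p`. Testing the matrix reverse
Hölder inequality against the coordinate vectors gives `⨍ V i i ^ p ≤ (C ⨍ V i i) ^ p ≤
(C ⨍ ‖V‖) ^ p`, so summing over `i`, `⨍ ‖V‖ ^ p ≤ d ^ p (C ⨍ ‖V‖) ^ p`: the scalar inequality
holds with constant `d C ≤ d ^ (3 - 1/p) C`.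
-/

open Finset

lemma vnormSq_single {d : ℕ} (i : Fin d) : vnormSq (Pi.single i (1 : ℝ)) = 1 := by
  simp [vnormSq, Pi.single_apply]

lemma qf_single {d : ℕ} (A : Matrix (Fin d) (Fin d) ℝ) (i : Fin d) :
    qf A (Pi.single i 1) = A i i := by
  simp [qf]

lemma matOpNorm_nonneg {d : ℕ} (A : Matrix (Fin d) (Fin d) ℝ) : 0 ≤ matOpNorm A :=
  Real.sSup_nonneg <| by
    rintro t ⟨e, -, rfl⟩
    exact Real.sqrt_nonneg _

namespace Matrix.PosSemidef

variable {d : ℕ} {A : Matrix (Fin d) (Fin d) ℝ}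

lemma sq_apply_le_mul_diag (hA : A.PosSemidef) (i j : Fin d) : A i j ^ 2 ≤ A i i * A j j := by
  have hquad : ∀ t : ℝ, 0 ≤ A i i * (t * t) + 2 * A i j * t + A j j := fun t => by
    have h := hA.dotProduct_mulVec_nonneg (t • Pi.single i 1 + Pi.single j 1)
    have hji : A j i = A i j := by simpa using hA.1.apply i j
    simp only [star_trivial, mulVec_add, mulVec_smul, mulVec_single, add_dotProduct,
      smul_dotProduct, dotProduct_add, dotProduct_smul, single_dotProduct, smul_eq_mul,
      col_apply, MulOpposite.op_one, one_smul, one_mul, hji] at h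
    linarith
  have hdisc := discrim_le_zero hquad
  rw [discrim] at hdisc
  nlinarith

lemma vnormSq_mulVec_le_trace_sq (hA : A.PosSemidef) {e : Fin d → ℝ} (he : vnormSq e = 1) :
    vnormSq (A *ᵥ e) ≤ A.trace ^ 2 :=
  calc vnormSq (A *ᵥ e) ≤ ∑ k, (∑ j, A k j ^ 2) * ∑ j, e j ^ 2 :=
        sum_le_sum fun k _ => sum_mul_sq_le_sq_mul_sq univ (A k) e
    _ = ∑ k, ∑ j, A k j ^ 2 := by simp only [show ∑ j, e j ^ 2 = 1 from he, mul_one]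
    _ ≤ ∑ k, ∑ j, A k k * A j j :=
        sum_le_sum fun k _ => sum_le_sum fun j _ => hA.sq_apply_le_mul_diag k j
    _ = A.trace ^ 2 := by rw [sq, trace, sum_mul_sum]; rfl

lemma matOpNorm_le_trace (hA : A.PosSemidef) : matOpNorm A ≤ A.trace := by
  refine Real.sSup_le ?_ hA.trace_nonneg
  rintro t ⟨e, he, rfl⟩
  calc √(vnormSq (A *ᵥ e)) ≤ √(A.trace ^ 2) :=
        Real.sqrt_le_sqrt (hA.vnormSq_mulVec_le_trace_sq he)
    _ = A.trace := Real.sqrt_sq hA.trace_nonneg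

lemma diag_le_matOpNorm (hA : A.PosSemidef) (i : Fin d) : A i i ≤ matOpNorm A := by
  have hbdd : BddAbove {t : ℝ | ∃ e : Fin d → ℝ, vnormSq e = 1 ∧ t = √(vnormSq (A *ᵥ e))} := by
    refine ⟨A.trace, ?_⟩
    rintro t ⟨e, he, rfl⟩
    exact Real.sqrt_le_iff.2 ⟨hA.trace_nonneg, hA.vnormSq_mulVec_le_trace_sq he⟩
  calc A i i = (A *ᵥ Pi.single i 1) i := by simp
    _ ≤ √(vnormSq (A *ᵥ Pi.single i 1)) :=
        Real.le_sqrt_of_sq_le <| single_le_sum (f := fun k => (A *ᵥ Pi.single i 1) k ^ 2)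
          (fun k _ => sq_nonneg _) (mem_univ i)
    _ ≤ matOpNorm A := le_csSup hbdd ⟨_, vnormSq_single i, rfl⟩

lemma matOpNorm_rpow_le (hA : A.PosSemidef) {p : ℝ} (hp : 1 ≤ p) :
    matOpNorm A ^ p ≤ (d : ℝ) ^ (p - 1) * ∑ i, A i i ^ p :=
  calc matOpNorm A ^ p ≤ A.trace ^ p :=
        Real.rpow_le_rpow (matOpNorm_nonneg A) hA.matOpNorm_le_trace (by linarith)
    _ ≤ _ := by
        simpa [trace] using Real.rpow_sum_le_const_mul_sum_rpow_of_nonneg (s := univ) hp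
          (fun i _ => hA.diag_nonneg (i := i))

end Matrix.PosSemidef

section ReverseHolder

variable {α : Type*} [MeasurableSpace α] {μ : Measure α} {d : ℕ}
  {V : α → Matrix (Fin d) (Fin d) ℝ} {p C : ℝ}

theorem integral_matOpNorm_rpow_le (hp : 1 ≤ p) (hC : 0 ≤ C)
    (hV : ∀ᵐ x ∂μ, (V x).PosSemidef) (hmeas : ∀ i, AEStronglyMeasurable (fun x => V x i i) μ)
    (hint : Integrable (fun x => matOpNorm (V x)) μ)
    (hint_p : Integrable (fun x => matOpNorm (V x) ^ p) μ)
    (hRH : ∀ i, ∫ x, V x i i ^ p ∂μ ≤ (C * ∫ x, V x i i ∂μ) ^ p) :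
    ∫ x, matOpNorm (V x) ^ p ∂μ ≤ ((d : ℝ) * C * ∫ x, matOpNorm (V x) ∂μ) ^ p := by
  have hdiag_int (i : Fin d) : Integrable (fun x => V x i i) μ :=
    hint.mono' (hmeas i) <| hV.mono fun x hx => by
      rw [Real.norm_of_nonneg hx.diag_nonneg]
      exact hx.diag_le_matOpNorm i
  have hdiag_int_p (i : Fin d) : Integrable (fun x => V x i i ^ p) μ :=
    hint_p.mono' ((hmeas i).aemeasurable.pow_const p).aestronglyMeasurable <|
      hV.mono fun x hx => by
        rw [Real.norm_of_nonneg (Real.rpow_nonneg hx.diag_nonneg _)]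
        exact Real.rpow_le_rpow hx.diag_nonneg (hx.diag_le_matOpNorm i) (by linarith)
  set N := ∫ x, matOpNorm (V x) ∂μ
  have hN : 0 ≤ N := integral_nonneg fun x => matOpNorm_nonneg _
  have hdiag_le (i : Fin d) : C * ∫ x, V x i i ∂μ ≤ C * N :=
    mul_le_mul_of_nonneg_left
      (integral_mono_ae (hdiag_int i) hint (hV.mono fun x hx => hx.diag_le_matOpNorm i)) hC
  calc ∫ x, matOpNorm (V x) ^ p ∂μ ≤ ∫ x, (d : ℝ) ^ (p - 1) * ∑ i, V x i i ^ p ∂μ :=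
        integral_mono_ae hint_p ((integrable_finsetSum _ fun i _ => hdiag_int_p i).const_mul _)
          (hV.mono fun x hx => hx.matOpNorm_rpow_le hp)
    _ = (d : ℝ) ^ (p - 1) * ∑ i, ∫ x, V x i i ^ p ∂μ := by
        rw [integral_const_mul, integral_finsetSum _ fun i _ => hdiag_int_p i]
    _ ≤ (d : ℝ) ^ (p - 1) * ∑ _i : Fin d, (C * N) ^ p := by
        gcongr with i
        refine (hRH i).trans (Real.rpow_le_rpow ?_ (hdiag_le i) (by linarith))
        exact mul_nonneg hC (integral_nonneg_of_ae (hV.mono fun x hx => hx.diag_nonneg))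
    _ = ((d : ℝ) * C * N) ^ p := by
        rw [sum_const, card_univ, Fintype.card_fin, nsmul_eq_mul, mul_assoc (d : ℝ),
          Real.mul_rpow d.cast_nonneg (mul_nonneg hC hN), ← mul_assoc,
          ← Real.rpow_add_one' d.cast_nonneg (by linarith), sub_add_cancel]

theorem average_matOpNorm_rpow_le (hp : 1 ≤ p) (hC : 0 ≤ C)
    (hV : ∀ᵐ x ∂μ, (V x).PosSemidef) (hmeas : ∀ i, AEStronglyMeasurable (fun x => V x i i) μ)
    (hint : Integrable (fun x => matOpNorm (V x)) μ)
    (hint_p : Integrable (fun x => matOpNorm (V x) ^ p) μ)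
    (hRH : ∀ i, (⨍ x, V x i i ^ p ∂μ) ^ (1 / p) ≤ C * ⨍ x, V x i i ∂μ) :
    (⨍ x, matOpNorm (V x) ^ p ∂μ) ^ (1 / p) ≤ (d : ℝ) * C * ⨍ x, matOpNorm (V x) ∂μ := by
  have hp0 : 0 < p := by linarith
  have hVavg := Measure.ae_smul_measure hV (μ Set.univ)⁻¹
  unfold average at hRH ⊢
  have hN : 0 ≤ ∫ x, matOpNorm (V x) ∂(μ Set.univ)⁻¹ • μ :=
    integral_nonneg fun x => matOpNorm_nonneg _
  rw [one_div, Real.rpow_inv_le_iff_of_pos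
    (integral_nonneg fun x => Real.rpow_nonneg (matOpNorm_nonneg _) _) (by positivity) hp0]
  refine integral_matOpNorm_rpow_le hp hC hVavg (fun i => (hmeas i).smul_measure _)
    hint.to_average hint_p.to_average fun i => ?_
  rw [← Real.rpow_inv_le_iff_of_pos
    (integral_nonneg_of_ae (hVavg.mono fun x hx => Real.rpow_nonneg hx.diag_nonneg _))
    (mul_nonneg hC (integral_nonneg_of_ae (hVavg.mono fun x hx => hx.diag_nonneg))) hp0]
  simpa only [one_div] using hRH i

end ReverseHolder

theorem statement0_general {n d : ℕ} (hd : 1 ≤ d) (p C_V : ℝ) (hp : 1 < p)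
    (hCV : 0 < C_V) (V : (Fin n → ℝ) → Matrix (Fin d) (Fin d) ℝ)
    (hW : IsMatrixWeight V) (hBp : MemBp p C_V V) :
    MemBpScalar p ((d : ℝ) ^ (3 - 1 / p) * C_V) fun x => matOpNorm (V x) := by
  obtain ⟨hmeas, hpsd, hloc⟩ := hW
  refine ⟨hBp.1, fun x r hr => ?_⟩
  have hRH (i : Fin d) :
      (⨍ y in cube x r, V y i i ^ p) ^ (1 / p) ≤ C_V * ⨍ y in cube x r, V y i i := by
    simpa only [qf_single, matAvg, Matrix.of_apply] using hBp.2 x r hr (Pi.single i 1)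
  calc (⨍ y in cube x r, matOpNorm (V y) ^ p) ^ (1 / p)
      ≤ d * C_V * ⨍ y in cube x r, matOpNorm (V y) :=
        average_matOpNorm_rpow_le hp.le hCV.le (ae_restrict_of_ae hpsd)
          (fun i => (hmeas i i).aestronglyMeasurable) (hloc x r hr) (hBp.1 x r hr) hRH
    _ ≤ (d : ℝ) ^ (3 - 1 / p) * C_V * ⨍ y in cube x r, matOpNorm (V y) := by
        have hp' : 1 / p ≤ 1 := by rw [div_le_one (by linarith)]; exact hp.le
        gcongr
        · exact integral_nonneg fun y => matOpNorm_nonneg _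
        · exact Real.self_le_rpow_of_one_le (by exact_mod_cast hd) (by linarith)

theorem statement0 {n d : ℕ} (hn : 1 ≤ n) (hd : 1 ≤ d) (p C_V : ℝ) (hp : 1 < p)
    (hCV : 0 < C_V) (V : (Fin n → ℝ) → Matrix (Fin d) (Fin d) ℝ)
    (hW : IsMatrixWeight V) (hBp : MemBp p C_V V) :
    MemBpScalar p ((d : ℝ) ^ (3 - 1 / p) * C_V) fun x => matOpNorm (V x) :=
  statement0_general hd p C_V hp hCV V hW hBp
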